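/- Every commutative separable algebra in a symmetric monoidal category is strongly separable: any separability idempotent for a commutative algebra can be replaced by a symmetric one (indeed for a commutative algebra every separability idempotent satisfying (κ1) and (κ2) is automatically symmetric). -/

import Mathlib

open CategoryTheory MonoidalCategory

universe v u

namespace Paper

variable {C : Type u} [Category.{v} C] [MonoidalCategory C] [SymmetricCategory C]

/-- (κ1): μ ∘ κ = u. -/
def kappa1 (M : Mon C) (κ : 𝟙_ C ⟶ M.X ⊗ M.X) : Prop :=
  κ ≫ (MonObj.mul (X := M.X)) = (MonObj.one (X := M.X))

/-- (κ2): (1 ⊗ μ) ∘ (κ ⊗ 1) = (μ ⊗ 1) ∘ (1 ⊗ κ), as morphisms A ⟶ A ⊗ A. -/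
def kappa2 (M : Mon C) (κ : 𝟙_ C ⟶ M.X ⊗ M.X) : Prop :=
  (λ_ M.X).inv ≫ (κ ▷ M.X) ≫ (α_ M.X M.X M.X).hom ≫ (M.X ◁ (MonObj.mul (X := M.X)))
    = (ρ_ M.X).inv ≫ (M.X ◁ κ) ≫ (α_ M.X M.X M.X).inv ≫ ((MonObj.mul (X := M.X)) ▷ M.X)

/-- (κ3): κ = τ ∘ κ. -/
def kappa3 (M : Mon C) (κ : 𝟙_ C ⟶ M.X ⊗ M.X) : Prop :=
  κ = κ ≫ (β_ M.X M.X).hom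

/-- (κ4): μ ∘ τ ∘ κ = u. -/
def kappa4 (M : Mon C) (κ : 𝟙_ C ⟶ M.X ⊗ M.X) : Prop :=
  κ ≫ (β_ M.X M.X).hom ≫ (MonObj.mul (X := M.X)) = (MonObj.one (X := M.X))

/-- A symmetric separability idempotent. -/
def IsSymSepIdem (M : Mon C) (κ : 𝟙_ C ⟶ M.X ⊗ M.X) : Prop :=
  kappa1 M κ ∧ kappa2 M κ ∧ kappa3 M κ

/-- Strongly separable: admits a symmetric separability idempotent. -/
def StronglySeparable (M : Mon C) : Prop :=
  ∃ κ : 𝟙_ C ⟶ M.X ⊗ M.X, IsSymSepIdem M κ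

/-- Separable: the multiplication admits an (A,A)-bilinear section σ. -/
def Separable (M : Mon C) : Prop :=
  ∃ σ : M.X ⟶ M.X ⊗ M.X,
    σ ≫ (MonObj.mul (X := M.X)) = 𝟙 M.X ∧
    (σ ▷ M.X) ≫ (α_ M.X M.X M.X).hom ≫ (M.X ◁ (MonObj.mul (X := M.X))) = (MonObj.mul (X := M.X)) ≫ σ ∧
    (MonObj.mul (X := M.X)) ≫ σ = (M.X ◁ σ) ≫ (α_ M.X M.X M.X).inv ≫ ((MonObj.mul (X := M.X)) ▷ M.X)

/-- The algebra is commutative: μ ∘ τ = μ. -/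
def Commutative (M : Mon C) : Prop :=
  (β_ M.X M.X).hom ≫ (MonObj.mul (X := M.X)) = (MonObj.mul (X := M.X))

/-- Duality data exhibiting `DA` as a dual of `A`, with evaluation `ε : A ⊗ DA ⟶ 𝟙`
and coevaluation `η : 𝟙 ⟶ DA ⊗ A`, satisfying the triangle identities. -/
structure DualityData (A : C) where
  DA : C
  η : 𝟙_ C ⟶ DA ⊗ A
  ε : A ⊗ DA ⟶ 𝟙_ C
  triangle₁ :
    (ρ_ A).inv ≫ (A ◁ η) ≫ (α_ A DA A).inv ≫ (ε ▷ A) ≫ (λ_ A).hom = 𝟙 A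
  triangle₂ :
    (λ_ DA).inv ≫ (η ▷ DA) ≫ (α_ DA A DA).hom ≫ (DA ◁ ε) ≫ (ρ_ DA).hom = 𝟙 DA

/-- The trace map tr : A ⟶ 𝟙 of a rigid algebra:
A ≅ A ⊗ 𝟙 → A ⊗ (DA ⊗ A) → A ⊗ (A ⊗ DA) → (A ⊗ A) ⊗ DA → A ⊗ DA → 𝟙. -/
def tr (M : Mon C) (D : DualityData M.X) : M.X ⟶ 𝟙_ C :=
  (ρ_ M.X).inv ≫ (M.X ◁ D.η) ≫ (M.X ◁ (β_ D.DA M.X).hom) ≫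
    (α_ M.X M.X D.DA).inv ≫ ((MonObj.mul (X := M.X)) ▷ D.DA) ≫ D.ε

/-- The trace form t = tr ∘ μ : A ⊗ A ⟶ 𝟙. -/
def traceForm (M : Mon C) (D : DualityData M.X) : M.X ⊗ M.X ⟶ 𝟙_ C :=
  (MonObj.mul (X := M.X)) ≫ tr M D

/-- The adjoint t* : A ⟶ DA of the trace form. -/
def tStar (M : Mon C) (D : DualityData M.X) : M.X ⟶ D.DA :=
  (λ_ M.X).inv ≫ (D.η ▷ M.X) ≫ (α_ D.DA M.X M.X).hom ≫
    (D.DA ◁ traceForm M D) ≫ (ρ_ D.DA).hom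

/-- Invariant (associative) form: f ∘ (μ ⊗ 1) = f ∘ (1 ⊗ μ). -/
def Invariant (M : Mon C) (f : M.X ⊗ M.X ⟶ 𝟙_ C) : Prop :=
  ((MonObj.mul (X := M.X)) ▷ M.X) ≫ f = (α_ M.X M.X M.X).hom ≫ (M.X ◁ (MonObj.mul (X := M.X))) ≫ f

/-- The map A ⟶ A ⊗ A corresponding to a separability idempotent κ
(the common value in (κ2)). -/
def sepComul (M : Mon C) (κ : 𝟙_ C ⟶ M.X ⊗ M.X) : M.X ⟶ M.X ⊗ M.X :=
  (λ_ M.X).inv ≫ (κ ▷ M.X) ≫ (α_ M.X M.X M.X).hom ≫ (M.X ◁ (MonObj.mul (X := M.X)))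

/-- A Frobenius structure on the algebra `M`: a compatible coalgebra structure
satisfying the Frobenius law. -/
structure FrobeniusStructure (M : Mon C) where
  Δ : M.X ⟶ M.X ⊗ M.X
  c : M.X ⟶ 𝟙_ C
  coassoc : Δ ≫ (Δ ▷ M.X) ≫ (α_ M.X M.X M.X).hom = Δ ≫ (M.X ◁ Δ)
  counit_left : Δ ≫ (c ▷ M.X) ≫ (λ_ M.X).hom = 𝟙 M.X
  counit_right : Δ ≫ (M.X ◁ c) ≫ (ρ_ M.X).hom = 𝟙 M.X
  frob_left :
    (Δ ▷ M.X) ≫ (α_ M.X M.X M.X).hom ≫ (M.X ◁ (MonObj.mul (X := M.X))) = (MonObj.mul (X := M.X)) ≫ Δ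
  frob_right :
    (MonObj.mul (X := M.X)) ≫ Δ = (M.X ◁ Δ) ≫ (α_ M.X M.X M.X).inv ≫ ((MonObj.mul (X := M.X)) ▷ M.X)

/-- Special: μ ∘ Δ = id. -/
def FrobeniusStructure.Special {M : Mon C} (F : FrobeniusStructure M) : Prop :=
  F.Δ ≫ (MonObj.mul (X := M.X)) = 𝟙 M.X

/-- Symmetric: the form c ∘ μ is symmetric. -/
def FrobeniusStructure.Symm {M : Mon C} (F : FrobeniusStructure M) : Prop :=
  (β_ M.X M.X).hom ≫ (MonObj.mul (X := M.X)) ≫ F.c = (MonObj.mul (X := M.X)) ≫ F.c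

open scoped MonObj

/-! ### Auxiliary lemmas -/

section Aux

/-- Whiskering a global element on the right of a tensor. -/
theorem aux_Ulem {B X Y : C} (e : 𝟙_ C ⟶ B) :
    ((λ_ X).inv ▷ Y) ≫ ((e ▷ X) ▷ Y) ≫ (α_ B X Y).hom
      = (λ_ (X ⊗ Y)).inv ≫ (e ▷ (X ⊗ Y)) := by
  slice_lhs 2 3 => rw [associator_naturality_left]
  have : ((λ_ X).inv ▷ Y) ≫ (α_ (𝟙_ C) X Y).hom = (λ_ (X ⊗ Y)).inv := by monoidal
  rw [← Category.assoc, this]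

/-- Moving a global element from the left to the right of an object by braiding. -/
theorem aux_Vlem {B X : C} (e : 𝟙_ C ⟶ B) :
    (λ_ X).inv ≫ (e ▷ X) ≫ (β_ B X).hom = (ρ_ X).inv ≫ (X ◁ e) := by
  rw [BraidedCategory.braiding_naturality_left, braiding_tensorUnit_left]
  simp

theorem aux_coh (A : C) :
    (α_ A (A ⊗ A) A).inv ≫ ((α_ A A A).inv ▷ A) ≫ (α_ (A ⊗ A) A A).hom
      = (A ◁ (α_ A A A).hom) ≫ (α_ A A (A ⊗ A)).inv := by monoidal

/-- tensorμ is compatible with the symmetry. -/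
theorem aux_T (A : C) : (β_ (A ⊗ A) (A ⊗ A)).hom ≫ tensorμ A A A A
    = tensorμ A A A A ≫ ((β_ A A).hom ⊗ₘ (β_ A A).hom) := by
  simp only [tensorμ, Category.assoc, BraidedCategory.braiding_naturality,
    BraidedCategory.braiding_tensor_right_hom, BraidedCategory.braiding_tensor_left_hom,
    comp_whiskerRight, whisker_assoc, MonoidalCategory.whiskerLeft_comp, pentagon_assoc,
    pentagon_inv_hom_hom_hom_inv_assoc, Iso.inv_hom_id_assoc, whiskerLeft_hom_inv_assoc]
  slice_lhs 11 12 =>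
    rw [← MonoidalCategory.whiskerLeft_comp, ← comp_whiskerRight,
      SymmetricCategory.symmetry]
  simp only [id_whiskerRight, MonoidalCategory.whiskerLeft_id, Category.id_comp,
    Category.assoc, Iso.inv_hom_id_assoc, Iso.hom_inv_id_assoc, MonoidalCategory.tensorHom_def]
  slice_lhs 10 11 =>
    rw [← MonoidalCategory.whiskerLeft_comp, Iso.inv_hom_id,
      MonoidalCategory.whiskerLeft_id]
  simp only [Category.id_comp, Category.assoc]
  slice_lhs 8 9 => rw [← associator_naturality_right]
  simp only [Category.assoc, Iso.hom_inv_id_assoc, Iso.hom_inv_id, Category.comp_id]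
  slice_lhs 6 7 => rw [associator_naturality_left]
  slice_lhs 4 6 => rw [aux_coh]
  simp only [Category.assoc]

theorem aux_G1 (A : C) : tensorμ A A A A ≫ ((β_ A A).hom ▷ (A ⊗ A))
    = (α_ (A ⊗ A) A A).inv ≫ ((β_ (A ⊗ A) A).hom ▷ A) ≫ ((α_ A A A).inv ▷ A) ≫
      (α_ (A ⊗ A) A A).hom := by
  simp only [tensorμ, Category.assoc, BraidedCategory.braiding_naturality,
    BraidedCategory.braiding_tensor_right_hom, BraidedCategory.braiding_tensor_left_hom,
    comp_whiskerRight, whisker_assoc, MonoidalCategory.whiskerLeft_comp, pentagon_assoc,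
    pentagon_inv_hom_hom_hom_inv_assoc, Iso.inv_hom_id_assoc, whiskerLeft_hom_inv_assoc]
  slice_rhs 7 8 => rw [← comp_whiskerRight, Iso.hom_inv_id, id_whiskerRight]
  simp only [Category.id_comp, Category.assoc]
  slice_rhs 6 7 => rw [associator_naturality_left]
  slice_rhs 4 6 => rw [aux_coh]
  simp only [Category.assoc]

variable (M : Mon C)

/-- a ↦ a e¹ ⊗ e². -/
def cRmap (e : 𝟙_ C ⟶ M.X ⊗ M.X) : M.X ⟶ M.X ⊗ M.X :=
  (ρ_ M.X).inv ≫ (M.X ◁ e) ≫ (α_ M.X M.X M.X).inv ≫ (μ[M.X] ▷ M.X)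

/-- (a,b) ↦ a e¹ ⊗ e² b. -/
def Kmap (e : 𝟙_ C ⟶ M.X ⊗ M.X) : M.X ⊗ M.X ⟶ M.X ⊗ M.X :=
  (cRmap M e ▷ M.X) ≫ (α_ M.X M.X M.X).hom ≫ (M.X ◁ μ[M.X])

/-- The product of two global elements of A ⊗ A for the tensor-product algebra. -/
def prodAA (x y : 𝟙_ C ⟶ M.X ⊗ M.X) : 𝟙_ C ⟶ M.X ⊗ M.X :=
  (λ_ (𝟙_ C)).inv ≫ (x ⊗ₘ y) ≫ tensorμ M.X M.X M.X M.X ≫ (μ[M.X] ⊗ₘ μ[M.X])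

theorem aux_G (e : 𝟙_ C ⟶ M.X ⊗ M.X) : η[M.X] ≫ sepComul M e = e := by
  unfold sepComul
  have h1 : η[M.X] ≫ (λ_ M.X).inv = (λ_ (𝟙_ C)).inv ≫ (𝟙_ C ◁ η[M.X]) := by simp
  rw [reassoc_of% h1]
  slice_lhs 2 3 => rw [whisker_exchange]
  slice_lhs 3 4 => rw [associator_naturality_right]
  slice_lhs 4 5 => rw [← MonoidalCategory.whiskerLeft_comp, MonObj.mul_one]
  simp [← unitors_equal]

theorem aux_F (e : 𝟙_ C ⟶ M.X ⊗ M.X) :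
    (sepComul M e ▷ M.X) ≫ (α_ M.X M.X M.X).hom ≫ (M.X ◁ μ[M.X])
      = μ[M.X] ≫ sepComul M e := by
  unfold sepComul
  simp only [comp_whiskerRight, Category.assoc]
  have h1 : μ[M.X] ≫ (λ_ M.X).inv = (λ_ (M.X ⊗ M.X)).inv ≫ (𝟙_ C ◁ μ[M.X]) := by simp
  rw [reassoc_of% h1]
  slice_rhs 2 3 => rw [whisker_exchange]
  slice_rhs 3 4 => rw [associator_naturality_right]
  have h2 : (M.X ◁ μ[M.X]) ≫ μ[M.X]
      = (α_ M.X M.X M.X).inv ≫ (μ[M.X] ▷ M.X) ≫ μ[M.X] := by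
    rw [MonObj.mul_assoc]; simp
  slice_rhs 4 6 => rw [← MonoidalCategory.whiskerLeft_comp, h2,
    MonoidalCategory.whiskerLeft_comp, MonoidalCategory.whiskerLeft_comp]
  slice_lhs 4 5 => rw [associator_naturality_middle]
  slice_lhs 5 7 => rw [← MonoidalCategory.whiskerLeft_comp, MonObj.mul_assoc,
    MonoidalCategory.whiskerLeft_comp, MonoidalCategory.whiskerLeft_comp]
  slice_lhs 3 5 => rw [pentagon]
  slice_lhs 1 3 => rw [aux_Ulem]
  simp only [Category.assoc]
  congr 3
  simp only [← MonoidalCategory.whiskerLeft_comp]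
  rw [h2]

/-- Central computation: inserting `e` on the left and multiplying with a twist
on the first factor computes `Kmap`. -/
theorem aux_D0 (e : 𝟙_ C ⟶ M.X ⊗ M.X) :
    (λ_ (M.X ⊗ M.X)).inv ≫ (e ▷ (M.X ⊗ M.X)) ≫ tensorμ M.X M.X M.X M.X ≫
        ((β_ M.X M.X).hom ▷ (M.X ⊗ M.X)) ≫ (μ[M.X] ⊗ₘ μ[M.X])
      = Kmap M e := by
  -- rewrite the left side via aux_G1
  rw [← Category.assoc (tensorμ M.X M.X M.X M.X), aux_G1]
  -- massage the right side
  unfold Kmap cRmap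
  simp only [comp_whiskerRight, Category.assoc]
  slice_rhs 4 5 => rw [associator_naturality_left]
  slice_rhs 5 6 => rw [← MonoidalCategory.tensorHom_def]
  -- move e into place on the left side
  slice_lhs 1 2 => rw [← aux_Ulem e]
  simp only [Category.assoc, Iso.hom_inv_id_assoc]
  slice_lhs 1 3 => rw [← comp_whiskerRight, ← comp_whiskerRight, aux_Vlem, comp_whiskerRight]
  simp only [Category.assoc, comp_whiskerRight]

theorem aux_D1 (e : 𝟙_ C ⟶ M.X ⊗ M.X) :
    (λ_ (M.X ⊗ M.X)).inv ≫ (e ▷ (M.X ⊗ M.X)) ≫ tensorμ M.X M.X M.X M.X ≫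
        (((β_ M.X M.X).hom ≫ μ[M.X]) ⊗ₘ μ[M.X])
      = Kmap M e := by
  rw [← aux_D0 M e]
  congr 2
  rw [← Category.id_comp μ[M.X], ← tensorHom_comp_tensorHom]
  simp

theorem aux_D2 (e : 𝟙_ C ⟶ M.X ⊗ M.X) :
    (ρ_ (M.X ⊗ M.X)).inv ≫ ((M.X ⊗ M.X) ◁ e) ≫ tensorμ M.X M.X M.X M.X ≫
        (μ[M.X] ⊗ₘ ((β_ M.X M.X).hom ≫ μ[M.X]))
      = Kmap M e := by
  slice_lhs 1 2 => rw [← aux_Vlem (X := M.X ⊗ M.X) e]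
  simp only [Category.assoc]
  have hsplit : (μ[M.X] ⊗ₘ ((β_ M.X M.X).hom ≫ μ[M.X]))
      = ((M.X ⊗ M.X) ◁ (β_ M.X M.X).hom) ≫ (μ[M.X] ⊗ₘ μ[M.X]) := by
    rw [← Category.id_comp μ[M.X], ← tensorHom_comp_tensorHom]
    simp
  rw [hsplit]
  have hmid : (β_ (M.X ⊗ M.X) (M.X ⊗ M.X)).hom ≫ tensorμ M.X M.X M.X M.X ≫
      ((M.X ⊗ M.X) ◁ (β_ M.X M.X).hom)
      = tensorμ M.X M.X M.X M.X ≫ ((β_ M.X M.X).hom ▷ (M.X ⊗ M.X)) := by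
    rw [← Category.assoc, aux_T, Category.assoc, MonoidalCategory.tensorHom_def]
    simp only [Category.assoc, ← MonoidalCategory.whiskerLeft_comp,
      SymmetricCategory.symmetry, MonoidalCategory.whiskerLeft_id, Category.comp_id]
  rw [reassoc_of% hmid]
  have := aux_D0 M e
  exact this

theorem aux_E1 (x z : 𝟙_ C ⟶ M.X ⊗ M.X) :
    prodAA M x z = z ≫ (λ_ (M.X ⊗ M.X)).inv ≫ (x ▷ (M.X ⊗ M.X)) ≫
      tensorμ M.X M.X M.X M.X ≫ (μ[M.X] ⊗ₘ μ[M.X]) := by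
  simp [prodAA, tensorHom_def']

theorem aux_E2 (x z : 𝟙_ C ⟶ M.X ⊗ M.X) :
    prodAA M z x = z ≫ (ρ_ (M.X ⊗ M.X)).inv ≫ ((M.X ⊗ M.X) ◁ x) ≫
      tensorμ M.X M.X M.X M.X ≫ (μ[M.X] ⊗ₘ μ[M.X]) := by
  simp [prodAA, MonoidalCategory.tensorHom_def, ← unitors_equal]

theorem aux_prod_braiding (x y : 𝟙_ C ⟶ M.X ⊗ M.X) :
    prodAA M x y ≫ (β_ M.X M.X).hom
      = prodAA M (x ≫ (β_ M.X M.X).hom) (y ≫ (β_ M.X M.X).hom) := by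
  have h := MonObj.mul_braiding M.X M.X
  simp only [MonObj.tensorObj.mul_def] at h
  simp [prodAA, Category.assoc, h, ← tensorHom_comp_tensorHom, -tensorHom_comp_tensorHom_assoc]

end Aux

/-- For a commutative algebra, every separability idempotent is
automatically symmetric; in particular a commutative separable algebra is strongly
separable. -/
theorem commutative_separable_is_stronglySeparable (M : Mon C)
    (hcomm : Commutative M) :
    (∀ κ : 𝟙_ C ⟶ M.X ⊗ M.X, kappa1 M κ → kappa2 M κ → kappa3 M κ) ∧
    (Separable M → StronglySeparable M) := by
  have main : ∀ κ : 𝟙_ C ⟶ M.X ⊗ M.X, kappa1 M κ → kappa2 M κ → kappa3 M κ := by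
    intro e h1 h2
    have h2' : sepComul M e = cRmap M e := h2
    have hk4 : (e ≫ (β_ M.X M.X).hom) ≫ μ[M.X] = η[M.X] := by
      rw [Category.assoc, hcomm]; exact h1
    have hKe : Kmap M e = μ[M.X] ≫ sepComul M e := by
      unfold Kmap
      rw [← h2', aux_F]
    have P1 : prodAA M e (e ≫ (β_ M.X M.X).hom) = e := by
      rw [aux_E1]
      have hc : (μ[M.X] ⊗ₘ μ[M.X]) = (((β_ M.X M.X).hom ≫ μ[M.X]) ⊗ₘ μ[M.X]) := by rw [hcomm]
      rw [hc, aux_D1, hKe, ← Category.assoc, hk4, aux_G]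
    have P2 : prodAA M (e ≫ (β_ M.X M.X).hom) e = e := by
      rw [aux_E2]
      have hc : (μ[M.X] ⊗ₘ μ[M.X]) = (μ[M.X] ⊗ₘ ((β_ M.X M.X).hom ≫ μ[M.X])) := by rw [hcomm]
      rw [hc, aux_D2, hKe, ← Category.assoc, hk4, aux_G]
    have hττ : (e ≫ (β_ M.X M.X).hom) ≫ (β_ M.X M.X).hom = e := by
      rw [Category.assoc, SymmetricCategory.symmetry, Category.comp_id]
    have : e ≫ (β_ M.X M.X).hom = e := by
      conv_lhs => rw [← P1]
      rw [aux_prod_braiding, hττ, P2]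
    exact this.symm
  refine ⟨main, ?_⟩
  rintro ⟨σ, hσ1, hσ2, hσ3⟩
  have hk1 : kappa1 M (η[M.X] ≫ σ) := by
    show (η[M.X] ≫ σ) ≫ μ[M.X] = η[M.X]
    rw [Category.assoc, hσ1, Category.comp_id]
  have hk2 : kappa2 M (η[M.X] ≫ σ) := by
    unfold kappa2
    have hl : (λ_ M.X).inv ≫ ((η[M.X] ≫ σ) ▷ M.X) ≫ (α_ M.X M.X M.X).hom ≫
        (M.X ◁ μ[M.X]) = σ := by
      rw [comp_whiskerRight]
      slice_lhs 3 5 => rw [hσ2]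
      slice_lhs 2 3 => rw [MonObj.one_mul]
      simp
    have hr : (ρ_ M.X).inv ≫ (M.X ◁ (η[M.X] ≫ σ)) ≫ (α_ M.X M.X M.X).inv ≫
        (μ[M.X] ▷ M.X) = σ := by
      rw [MonoidalCategory.whiskerLeft_comp]
      slice_lhs 3 5 => rw [← hσ3]
      slice_lhs 2 3 => rw [MonObj.mul_one]
      simp
    rw [hl, hr]
  exact ⟨η[M.X] ≫ σ, hk1, hk2, main _ hk1 hk2⟩

end Paper
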